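/- arXiv:2503.22915 — 8 statements merged into one kernel-verified Lean document; each statement's English description precedes it below -/
import Mathlib

section
/- Let S, A, B be real n×n matrices such that S is symmetric positive definite, SA and SB are symmetric, and SB is positive semidefinite, and set A_S := S^{1/2} A S^{-1/2}, B_S := S^{1/2} B S^{-1/2}. Suppose K_S is a real skew-symmetric n×n matrix and θ > 0 is such that [K_S A_S]^s + B_S ≥ θ I (i.e., the symmetric matrix [K_S A_S]^s + B_S − θI is positive semidefinite). Define K := S^{1/2} K_S S^{-1/2}. Then: (a) KS is skew-symmetric; (b) [K S A]^s + S B = S^{1/2}([K_S A_S]^s + B_S) S^{1/2}; and (c) [K S A]^s + S B is positive definite. -/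
open Matrix

/-- The symmetric part `[M]ˢ = (1/2)(M + Mᵀ)` of a real square matrix. -/
noncomputable def symPart {n : ℕ} (M : Matrix (Fin n) (Fin n) ℝ) : Matrix (Fin n) (Fin n) ℝ :=
  (1 / 2 : ℝ) • (M + Mᵀ)

/-- The positive semidefinite square root of a positive semidefinite matrix, with the
definition `Matrix.PosSemidef.sqrt` had in the older Mathlib (removed since). -/
noncomputable def Matrix.PosSemidef.sqrt {n : Type*} [Fintype n] [DecidableEq n]
    {A : Matrix n n ℝ} (hA : A.PosSemidef) : Matrix n n ℝ :=
  hA.1.eigenvectorUnitary.1 * diagonal ((↑) ∘ (√·) ∘ hA.1.eigenvalues) *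
  (star hA.1.eigenvectorUnitary : Matrix n n ℝ)

/-!
Write `R := S^{1/2}`, a symmetric invertible matrix with `R * R = S`. Then
`K S = R K_S R⁻¹ R R = R K_S R`, a congruence of the skew matrix `K_S`, hence skew; the
same cancellation `R⁻¹ R = 1` shows that `K S A` and `S B` are the congruences by `R` of
`K_S A_S` and `B_S`, and congruence by a symmetric matrix commutes with taking symmetric
parts. Finally `[K_S A_S]ˢ + B_S ≥ θ I > 0`, and congruence by an invertible matrix
preserves positive definiteness.
-/

namespace Matrix.PosSemidef

variable {ι : Type*} [Fintype ι] [DecidableEq ι] {S : Matrix ι ι ℝ} (hS : S.PosSemidef)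

theorem posSemidef_sqrt : hS.sqrt.PosSemidef := by
  rw [sqrt, star_eq_conjTranspose]
  exact (posSemidef_diagonal_iff.mpr fun i => Real.sqrt_nonneg _).mul_mul_conjTranspose_same _

theorem transpose_sqrt : hS.sqrtᵀ = hS.sqrt := by
  simpa [IsHermitian, conjTranspose_eq_transpose_of_trivial] using hS.posSemidef_sqrt.isHermitian

theorem sqrt_mul_self : hS.sqrt * hS.sqrt = S := by
  have hsqrt : hS.sqrt = Unitary.conjStarAlgAut ℝ _ hS.1.eigenvectorUnitary
      (diagonal ((↑) ∘ (√·) ∘ hS.1.eigenvalues)) := by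
    rw [Unitary.conjStarAlgAut_apply]; rfl
  conv_rhs => rw [hS.1.spectral_theorem]
  rw [hsqrt, ← map_mul, diagonal_mul_diagonal]
  congr 2
  funext i
  exact Real.mul_self_sqrt (hS.eigenvalues_nonneg i)

end Matrix.PosSemidef

theorem Matrix.PosDef.isUnit_sqrt {ι : Type*} [Fintype ι] [DecidableEq ι] {S : Matrix ι ι ℝ}
    (hS : S.PosDef) : IsUnit hS.posSemidef.sqrt :=
  isUnit_mul_self_iff.mp (by rw [hS.posSemidef.sqrt_mul_self]; exact hS.isUnit)

theorem Matrix.transpose_mul_mul_eq_neg_of_skew {ι α : Type*} [Fintype ι] [CommRing α]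
    {R K : Matrix ι ι α}
    (hR : Rᵀ = R) (hK : Kᵀ = -K) : (R * K * R)ᵀ = -(R * K * R) := by
  rw [transpose_mul, transpose_mul, hR, hK]
  noncomm_ring

theorem Matrix.posDef_of_posSemidef_sub_smul_one {ι : Type*} [Fintype ι] [DecidableEq ι]
    {M : Matrix ι ι ℝ} {θ : ℝ} (hθ : 0 < θ) (h : (M - θ • (1 : Matrix ι ι ℝ)).PosSemidef) :
    M.PosDef := by
  have hθI : (θ • (1 : Matrix ι ι ℝ)).PosDef := by
    rw [smul_one_eq_diagonal]
    exact posDef_diagonal_iff.mpr fun _ => hθ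
  simpa using PosDef.posSemidef_add h hθI

section symPart

variable {n : ℕ} {R : Matrix (Fin n) (Fin n) ℝ}

theorem symPart_mul_mul_of_transpose_eq (hR : Rᵀ = R) (M : Matrix (Fin n) (Fin n) ℝ) :
    symPart (R * M * R) = R * symPart M * R := by
  simp only [symPart, transpose_mul, hR]
  noncomm_ring

theorem symPart_conj_mul_add_mul_eq (hR : Rᵀ = R) (hRu : IsUnit R.det)
    (K A B : Matrix (Fin n) (Fin n) ℝ) :
    symPart (R * K * R⁻¹ * (R * R) * A) + R * R * B =
      R * (symPart (K * (R * A * R⁻¹)) + R * B * R⁻¹) * R := by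
  have hKA : R * K * R⁻¹ * (R * R) * A = R * (K * (R * A * R⁻¹)) * R := by
    simp only [← mul_assoc, nonsing_inv_mul_cancel_right _ _ hRu]
  have hB : R * R * B = R * (R * B * R⁻¹) * R := by
    simp only [← mul_assoc, nonsing_inv_mul_cancel_right _ _ hRu]
  rw [hKA, hB, symPart_mul_mul_of_transpose_eq hR, mul_add, add_mul]

end symPart

theorem compensating_symbol_conjugation_general (n : ℕ)
    (S A B K_S : Matrix (Fin n) (Fin n) ℝ) (θ : ℝ)
    (hS : S.PosDef)
    (hKskew : K_Sᵀ = -K_S) (hθ : 0 < θ)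
    (hpos : (symPart (K_S * (hS.posSemidef.sqrt * A * hS.posSemidef.sqrt⁻¹)) +
        hS.posSemidef.sqrt * B * hS.posSemidef.sqrt⁻¹ -
        θ • (1 : Matrix (Fin n) (Fin n) ℝ)).PosSemidef) :
    ((hS.posSemidef.sqrt * K_S * hS.posSemidef.sqrt⁻¹ * S)ᵀ =
      -(hS.posSemidef.sqrt * K_S * hS.posSemidef.sqrt⁻¹ * S)) ∧
    (symPart (hS.posSemidef.sqrt * K_S * hS.posSemidef.sqrt⁻¹ * S * A) + S * B =
      hS.posSemidef.sqrt *
        (symPart (K_S * (hS.posSemidef.sqrt * A * hS.posSemidef.sqrt⁻¹)) +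
          hS.posSemidef.sqrt * B * hS.posSemidef.sqrt⁻¹) * hS.posSemidef.sqrt) ∧
    (symPart (hS.posSemidef.sqrt * K_S * hS.posSemidef.sqrt⁻¹ * S * A) + S * B).PosDef := by
  have hRR := hS.posSemidef.sqrt_mul_self
  set R := hS.posSemidef.sqrt
  have hRt : Rᵀ = R := hS.posSemidef.transpose_sqrt
  have hRu : IsUnit R := hS.isUnit_sqrt
  have hRdet : IsUnit R.det := (isUnit_iff_isUnit_det R).mp hRu
  have hb := symPart_conj_mul_add_mul_eq hRt hRdet K_S A B
  rw [hRR] at hb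
  refine ⟨?_, hb, ?_⟩
  · rw [← hRR, ← mul_assoc, nonsing_inv_mul_cancel_right _ _ hRdet]
    exact transpose_mul_mul_eq_neg_of_skew hRt hKskew
  · have hM := posDef_of_posSemidef_sub_smul_one hθ hpos
    have hRMR := hM.conjTranspose_mul_mul_same (mulVec_injective_of_isUnit hRu)
    rwa [conjTranspose_eq_transpose_of_trivial, hRt, ← hb] at hRMR

/-- With `S` symmetric positive definite, `S*A`, `S*B` symmetric, `S*B`
positive semidefinite, `A_S := S^(1/2) A S^(-1/2)`, `B_S := S^(1/2) B S^(-1/2)`, if `K_S`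
is skew-symmetric and `[K_S A_S]ˢ + B_S ≥ θ I` for some `θ > 0`, then
`K := S^(1/2) K_S S^(-1/2)` satisfies: (a) `K*S` is skew-symmetric;
(b) `[K S A]ˢ + S B = S^(1/2) ([K_S A_S]ˢ + B_S) S^(1/2)`; (c) `[K S A]ˢ + S B` is
positive definite. -/
theorem compensating_symbol_conjugation (n : ℕ)
    (S A B K_S : Matrix (Fin n) (Fin n) ℝ) (θ : ℝ)
    (hS : S.PosDef) (hSA : (S * A).IsSymm) (hSB : (S * B).IsSymm)
    (hSBpsd : (S * B).PosSemidef)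
    (hKskew : K_Sᵀ = -K_S) (hθ : 0 < θ)
    (hpos : (symPart (K_S * (hS.posSemidef.sqrt * A * hS.posSemidef.sqrt⁻¹)) +
        hS.posSemidef.sqrt * B * hS.posSemidef.sqrt⁻¹ -
        θ • (1 : Matrix (Fin n) (Fin n) ℝ)).PosSemidef) :
    ((hS.posSemidef.sqrt * K_S * hS.posSemidef.sqrt⁻¹ * S)ᵀ =
      -(hS.posSemidef.sqrt * K_S * hS.posSemidef.sqrt⁻¹ * S)) ∧
    (symPart (hS.posSemidef.sqrt * K_S * hS.posSemidef.sqrt⁻¹ * S * A) + S * B =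
      hS.posSemidef.sqrt *
        (symPart (K_S * (hS.posSemidef.sqrt * A * hS.posSemidef.sqrt⁻¹)) +
          hS.posSemidef.sqrt * B * hS.posSemidef.sqrt⁻¹) * hS.posSemidef.sqrt) ∧
    (symPart (hS.posSemidef.sqrt * K_S * hS.posSemidef.sqrt⁻¹ * S * A) + S * B).PosDef :=
  compensating_symbol_conjugation_general n S A B K_S θ hS hKskew hθ hpos
end

section
/- Let A be an n×n Hermitian complex matrix with spectral resolution A = λ₁P₁ + ⋯ + λ_rP_r, where λ₁,…,λ_r are distinct real numbers and P₁,…,P_r are Hermitian matrices satisfying P_iP_j = P_j if i = j, P_iP_j = 0 if i ≠ j, and P₁ + ⋯ + P_r = I, and let B be an n×n Hermitian positive semidefinite matrix. Then the following are equivalent: (a) no eigenvector of A lies in the kernel of B, i.e., for every μ ∈ ℂ and every ψ ∈ ℂⁿ with ψ ≠ 0 and Bψ = 0 one has Aψ ≠ μψ; (b) there exists θ > 0 such that Σ_{j=1}^{r} ⟨P_j x, B P_j x⟩ ≥ θ |x|² for all x ∈ ℂⁿ. -/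
/-!
With `M = ∑ⱼ Pⱼᴴ B Pⱼ`, the form in (b) is `⟨x, M x⟩` and `M` is positive semidefinite, so (b)
says that `M` is positive definite. If `⟨x, M x⟩ = 0` then `B Pⱼ x = 0` for every `j`; as each
`Pⱼ x` is zero or an eigenvector of `A`, (a) forces `x = ∑ⱼ Pⱼ x = 0`. Conversely, since the
`λⱼ` are distinct, an eigenvector `ψ` of `A` lies in the range of a single `Pⱼ`, so `B ψ = 0`
makes every term of the form vanish at `ψ`.
-/

open Matrix Finset
open scoped ComplexOrder MatrixOrder

namespace OrthogonalIdempotents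

variable {R A ι : Type*} [CommSemiring R] [Semiring A] [Algebra R A] [Fintype ι] {e : ι → A}

lemma sum_smul_mul (he : OrthogonalIdempotents e) (c : ι → R) (j : ι) :
    (∑ i, c i • e i) * e j = c j • e j := by
  classical
  simp [Finset.sum_mul, he.mul_eq]

lemma mul_sum_smul (he : OrthogonalIdempotents e) (c : ι → R) (j : ι) :
    e j * (∑ i, c i • e i) = c j • e j := by
  classical
  simp [Finset.mul_sum, he.mul_eq]

end OrthogonalIdempotents

namespace CompleteOrthogonalIdempotents

variable {n ι : Type*} [Fintype n] [DecidableEq n] [Fintype ι]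

lemma sum_mulVec {R : Type*} [Semiring R] {P : ι → Matrix n n R}
    (hP : CompleteOrthogonalIdempotents P) (x : n → R) : ∑ j, P j *ᵥ x = x := by
  rw [← Matrix.sum_mulVec, hP.complete, one_mulVec]

lemma mulVec_eq_ite_of_mulVec_eq_smul {K : Type*} [Field K] [DecidableEq K]
    {P : ι → Matrix n n K} (hP : CompleteOrthogonalIdempotents P) {c : ι → K}
    (hc : Function.Injective c) {μ : K} {ψ : n → K} (hψ : (∑ i, c i • P i) *ᵥ ψ = μ • ψ)
    (j : ι) : P j *ᵥ ψ = if c j = μ then ψ else 0 := by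
  have hcases : ∀ k, c k = μ ∨ P k *ᵥ ψ = 0 := fun k => by
    have h := congrArg (P k *ᵥ ·) hψ
    simp only [mulVec_mulVec, hP.mul_sum_smul, smul_mulVec, mulVec_smul] at h
    rwa [← sub_eq_zero, ← sub_smul, smul_eq_zero, sub_eq_zero] at h
  split_ifs with hj
  · calc P j *ᵥ ψ = ∑ k, P k *ᵥ ψ :=
          (Finset.sum_eq_single_of_mem j (mem_univ j) fun k _ hkj =>
            (hcases k).resolve_left fun hk => hkj (hc (hk.trans hj.symm))).symm
      _ = ψ := hP.sum_mulVec ψ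
  · exact (hcases j).resolve_left hj

end CompleteOrthogonalIdempotents

namespace Matrix

variable {𝕜 n ι : Type*} [RCLike 𝕜] [Fintype n] [Fintype ι]

lemma re_star_dotProduct_self (x : n → 𝕜) : RCLike.re (star x ⬝ᵥ x) = ∑ i, ‖x i‖ ^ 2 := by
  simp only [dotProduct, Pi.star_apply, RCLike.star_def, RCLike.conj_mul, map_sum]
  norm_cast

lemma PosDef.exists_pos_mul_sum_norm_sq_le [DecidableEq n] {M : Matrix n n 𝕜} (hM : M.PosDef) :
    ∃ θ : ℝ, 0 < θ ∧ ∀ x : n → 𝕜, θ * ∑ i, ‖x i‖ ^ 2 ≤ RCLike.re (star x ⬝ᵥ (M *ᵥ x)) := by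
  cases isEmpty_or_nonempty n
  · exact ⟨1, one_pos, fun x => by simp⟩
  obtain ⟨θ, hθ, hθM⟩ : ∃ θ > 0, algebraMap ℝ _ θ ≤ M :=
    (CFC.exists_pos_algebraMap_le_iff hM.isHermitian.isSelfAdjoint).2
      ((StarOrderedRing.isStrictlyPositive_iff_spectrum_pos M).1 hM.isStrictlyPositive)
  refine ⟨θ, hθ, fun x => ?_⟩
  have h := (le_iff.1 hθM).re_dotProduct_nonneg x
  rw [Algebra.algebraMap_eq_smul_one, sub_mulVec, dotProduct_sub, map_sub, smul_mulVec,
    one_mulVec, dotProduct_smul, RCLike.smul_re, re_star_dotProduct_self] at h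
  linarith

lemma sum_star_mulVec_dotProduct_mulVec_mulVec {R : Type*} [CommSemiring R] [StarRing R]
    (P : ι → Matrix n n R) (B : Matrix n n R) (x : n → R) :
    ∑ j, star (P j *ᵥ x) ⬝ᵥ (B *ᵥ (P j *ᵥ x)) = star x ⬝ᵥ ((∑ j, (P j)ᴴ * B * P j) *ᵥ x) := by
  simp only [Matrix.sum_mulVec, dotProduct_sum, star_mulVec, dotProduct_mulVec, vecMul_vecMul,
    Matrix.mul_assoc]

lemma posDef_sum_conjTranspose_mul_mul [DecidableEq n] {P : ι → Matrix n n 𝕜}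
    (hP : ∑ j, P j = 1) {B : Matrix n n 𝕜} (hB : B.PosSemidef)
    (hker : ∀ j x, B *ᵥ (P j *ᵥ x) = 0 → P j *ᵥ x = 0) :
    (∑ j, (P j)ᴴ * B * P j).PosDef := by
  have hpsd : (∑ j, (P j)ᴴ * B * P j).PosSemidef :=
    posSemidef_sum _ fun j _ => hB.conjTranspose_mul_mul_same _
  refine .of_dotProduct_mulVec_pos hpsd.isHermitian fun x hx =>
    (hpsd.dotProduct_mulVec_nonneg x).lt_of_ne' fun h0 => hx ?_
  rw [← sum_star_mulVec_dotProduct_mulVec_mulVec,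
    Finset.sum_eq_zero_iff_of_nonneg fun j _ => hB.dotProduct_mulVec_nonneg _] at h0
  rw [← one_mulVec x, ← hP, Matrix.sum_mulVec]
  exact Finset.sum_eq_zero fun j _ =>
    hker j x ((hB.dotProduct_mulVec_zero_iff _).1 (h0 j (mem_univ j)))

end Matrix

theorem genuine_coupling_iff_uniform_projection_bound_general (n r : ℕ)
    (A : Matrix (Fin n) (Fin n) ℂ) (l : Fin r → ℝ)
    (P : Fin r → Matrix (Fin n) (Fin n) ℂ)
    (hdist : Function.Injective l)
    (hPP : ∀ i j, P i * P j = if i = j then P j else 0)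
    (hsum : ∑ j, P j = 1)
    (hA : A = ∑ j, (l j : ℂ) • P j)
    (B : Matrix (Fin n) (Fin n) ℂ) (hB : B.PosSemidef) :
    (∀ (μ : ℂ) (ψ : Fin n → ℂ), ψ ≠ 0 → B *ᵥ ψ = 0 → A *ᵥ ψ ≠ μ • ψ) ↔
    (∃ θ : ℝ, 0 < θ ∧ ∀ x : Fin n → ℂ,
      θ * ∑ i, Complex.normSq (x i) ≤
        (∑ j, star (P j *ᵥ x) ⬝ᵥ (B *ᵥ (P j *ᵥ x))).re) := by
  have hP : CompleteOrthogonalIdempotents P :=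
    ⟨⟨fun i => by simpa [IsIdempotentElem] using hPP i i,
      fun i j hij => by simpa [hij] using hPP i j⟩, hsum⟩
  constructor
  · intro h
    have hker : ∀ j x, B *ᵥ (P j *ᵥ x) = 0 → P j *ᵥ x = 0 := fun j x hBx => by
      by_contra hx
      exact h (l j) (P j *ᵥ x) hx hBx (by rw [hA, mulVec_mulVec, hP.sum_smul_mul, smul_mulVec])
    obtain ⟨θ, hθ, hbound⟩ :=
      (posDef_sum_conjTranspose_mul_mul hsum hB hker).exists_pos_mul_sum_norm_sq_le
    refine ⟨θ, hθ, fun x => ?_⟩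
    simpa only [sum_star_mulVec_dotProduct_mulVec_mulVec, Complex.normSq_eq_norm_sq,
      RCLike.re_to_complex] using hbound x
  · rintro ⟨θ, hθ, hbound⟩ μ ψ hψ hBψ hAψ
    have hBP : ∀ j, B *ᵥ (P j *ᵥ ψ) = 0 := fun j => by
      rw [hP.mulVec_eq_ite_of_mulVec_eq_smul (Complex.ofReal_injective.comp hdist) (hA ▸ hAψ) j]
      split_ifs <;> simp [hBψ]
    have hpos : 0 < ∑ i, Complex.normSq (ψ i) := by
      obtain ⟨i, hi⟩ := Function.ne_iff.mp hψ
      exact Finset.sum_pos' (fun i _ => Complex.normSq_nonneg _)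
        ⟨i, mem_univ i, Complex.normSq_pos.2 hi⟩
    have h := hbound ψ
    simp only [hBP, dotProduct_zero, sum_const_zero, Complex.zero_re] at h
    exact (mul_pos hθ hpos).not_ge h

/-- Let `A = ∑ λⱼ • Pⱼ` be the spectral resolution of a Hermitian complex
matrix (distinct real `λⱼ`, Hermitian idempotent mutually annihilating projections `Pⱼ`
summing to the identity), and let `B` be Hermitian positive semidefinite.  Then no
eigenvector of `A` lies in the kernel of `B` if and only if there is `θ > 0` with
`∑ⱼ ⟨Pⱼ x, B Pⱼ x⟩ ≥ θ ‖x‖²` for all `x ∈ ℂⁿ`. -/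
theorem genuine_coupling_iff_uniform_projection_bound (n r : ℕ)
    (A : Matrix (Fin n) (Fin n) ℂ) (l : Fin r → ℝ)
    (P : Fin r → Matrix (Fin n) (Fin n) ℂ)
    (hdist : Function.Injective l)
    (hPherm : ∀ j, (P j).IsHermitian)
    (hPP : ∀ i j, P i * P j = if i = j then P j else 0)
    (hsum : ∑ j, P j = 1)
    (hA : A = ∑ j, (l j : ℂ) • P j)
    (B : Matrix (Fin n) (Fin n) ℂ) (hB : B.PosSemidef) :
    (∀ (μ : ℂ) (ψ : Fin n → ℂ), ψ ≠ 0 → B *ᵥ ψ = 0 → A *ᵥ ψ ≠ μ • ψ) ↔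
    (∃ θ : ℝ, 0 < θ ∧ ∀ x : Fin n → ℂ,
      θ * ∑ i, Complex.normSq (x i) ≤
        (∑ j, star (P j *ᵥ x) ⬝ᵥ (B *ᵥ (P j *ᵥ x))).re) :=
  genuine_coupling_iff_uniform_projection_bound_general n r A l P hdist hPP hsum hA B hB
end

section
/- Let c ∈ ℝ, c ≠ 0. Let C₁ be the real 3×3 matrix whose (2,1) entry is c and all other entries are 0, and let C₂ be the real 3×3 matrix whose (3,1) entry is c and all other entries are 0. Then there is no real symmetric positive definite 3×3 matrix S such that both S·C₁ and S·C₂ are symmetric. (Consequently, the linearized Navier–Stokes–Korteweg system in two space dimensions, whose third-order coefficient matrices are of this form with c = k̄ρ̄ > 0, is not symmetrizable in the sense of Friedrichs.) -/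
open Matrix

namespace Matrix

variable {n R : Type*} [DecidableEq n]

theorem IsSymm.apply_mul_single_eq_zero [Fintype n] [NonUnitalNonAssocSemiring R]
    {M : Matrix n n R} {i j : n} {c : R} (hM : (M * single i j c).IsSymm) (hij : i ≠ j) :
    M i i * c = 0 := by
  rw [← mul_single_apply_same c i j i M, hM.apply j i, mul_single_apply_of_ne c i j j i hij]

theorem PosDef.not_isSymm_mul_single [Fintype n] [Ring R] [PartialOrder R] [StarRing R]
    [NoZeroDivisors R] [Nontrivial R] {S : Matrix n n R} (hS : S.PosDef) {i j : n} (hij : i ≠ j)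
    {c : R} (hc : c ≠ 0) : ¬ (S * single i j c).IsSymm := fun h ↦
  mul_ne_zero hS.diag_pos.ne' hc (h.apply_mul_single_eq_zero hij)

end Matrix

/-- For `c ≠ 0`, there is no real symmetric positive definite `3 × 3`
matrix `S` such that both `S * C₁` and `S * C₂` are symmetric, where `C₁` has `c` in
position `(2,1)` and zeros elsewhere, and `C₂` has `c` in position `(3,1)` and zeros
elsewhere.  Consequently, the linearized two-dimensional Navier–Stokes–Korteweg system
is not symmetrizable in the sense of Friedrichs. -/
theorem NSK_not_Friedrichs_symmetrizable (c : ℝ) (hc : c ≠ 0) :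
    ¬ ∃ S : Matrix (Fin 3) (Fin 3) ℝ, S.PosDef ∧
      (S * !![0, 0, 0; c, 0, 0; 0, 0, 0]).IsSymm ∧
      (S * !![0, 0, 0; 0, 0, 0; c, 0, 0]).IsSymm := by
  rintro ⟨S, hS, hC₁, -⟩
  have hC₁_single : !![0, 0, 0; c, 0, 0; 0, 0, 0] = single 1 0 c := by
    ext i j
    fin_cases i <;> fin_cases j <;> rfl
  exact hS.not_isSymm_mul_single (by decide) hc (hC₁_single ▸ hC₁)
end

section
/- Fix constants ρ̄ > 0, p̄_ρ > 0, k̄ > 0, ν̄ > 0, λ̄ ∈ ℝ with 2ν̄ + λ̄ > 0, and ū₁, ū₂ ∈ ℝ. For ξ ∈ ℝ² with ξ ≠ 0, set ω = ξ/|ξ|, β(ξ) = p̄_ρ + k̄ρ̄|ξ|², and define the real 3×3 matrices A_S(ξ) = [[ω₁ū₁+ω₂ū₂, ω₁√β(ξ), ω₂√β(ξ)], [ω₁√β(ξ), ω₁ū₁+ω₂ū₂, 0], [ω₂√β(ξ), 0, ω₁ū₁+ω₂ū₂]] and B̄_S(ξ) = (1/ρ̄)[[0,0,0], [0, (2ν̄+λ̄)ω₁²+ν̄ω₂²,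 (λ̄+ν̄)ω₁ω₂], [0, (λ̄+ν̄)ω₁ω₂, ν̄ω₁²+(2ν̄+λ̄)ω₂²]]. Then for every ξ ≠ 0: B̄_S(ξ) is positive semidefinite, its kernel equals span{(1,0,0)}, and the pair (A_S(ξ), B̄_S(ξ)) is genuinely coupled, i.e., for every μ ∈ ℝ and every ψ ∈ ℝ³ with ψ ≠ 0 and B̄_S(ξ)ψ = 0, one has (μI + A_S(ξ))ψ ≠ 0. -/
open Matrix

/-!
The viscosity symbol only acts on the velocity components, where, for a unit direction `ω`,
it is `(2ν + λ)` times the projection onto `ω` plus `ν` times the projection onto `ω⊥`.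
Both coefficients being positive, it is positive semidefinite with kernel the density axis
`e₀`. The transport symbol moves `e₀` to `(ω·u, ω₁√β, ω₂√β)`, which is never parallel to `e₀`
because `ω ≠ 0` and `β > 0`; so no eigenvector of `A_S` lies in the kernel.
-/

/-- Genuine coupling of a pair of real matrices `(A, B)`: no eigenvector of `A`
lies in the kernel of `B`. -/
def GenuinelyCoupled {n : ℕ} (A B : Matrix (Fin n) (Fin n) ℝ) : Prop :=
  ∀ (μ : ℝ) (ψ : Fin n → ℝ), ψ ≠ 0 → B *ᵥ ψ = 0 →
    (μ • (1 : Matrix (Fin n) (Fin n) ℝ) + A) *ᵥ ψ ≠ 0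

theorem GenuinelyCoupled.of_mulVec_eq_zero_iff {n : ℕ} {A B : Matrix (Fin n) (Fin n) ℝ}
    {v : Fin n → ℝ} (hB : ∀ ψ, B *ᵥ ψ = 0 ↔ ∃ t : ℝ, ψ = t • v)
    (hA : ∀ μ : ℝ, (μ • (1 : Matrix (Fin n) (Fin n) ℝ) + A) *ᵥ v ≠ 0) :
    GenuinelyCoupled A B := by
  intro μ ψ hψ hBψ hAψ
  obtain ⟨t, rfl⟩ := (hB ψ).mp hBψ
  rw [mulVec_smul, smul_eq_zero] at hAψ
  exact hAψ.elim (fun ht => hψ (by simp [ht])) (hA μ)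

/-- The viscosity symbol `ρ̄ B̄_S(ξ)`, as a function of the direction `ω = ξ / |ξ|`. -/
def viscositySymbol (ν lam ω₁ ω₂ : ℝ) : Matrix (Fin 3) (Fin 3) ℝ :=
  !![0, 0, 0;
     0, (2 * ν + lam) * ω₁ ^ 2 + ν * ω₂ ^ 2, (lam + ν) * ω₁ * ω₂;
     0, (lam + ν) * ω₁ * ω₂, ν * ω₁ ^ 2 + (2 * ν + lam) * ω₂ ^ 2]

theorem dotProduct_viscositySymbol_mulVec (ν lam ω₁ ω₂ : ℝ) (x : Fin 3 → ℝ) :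
    x ⬝ᵥ (viscositySymbol ν lam ω₁ ω₂ *ᵥ x) =
      (2 * ν + lam) * (ω₁ * x 1 + ω₂ * x 2) ^ 2 + ν * (ω₂ * x 1 - ω₁ * x 2) ^ 2 := by
  simp only [dotProduct, mulVec, viscositySymbol, of_apply, cons_val', cons_val_fin_one,
    Fin.sum_univ_three, cons_val_zero, cons_val_one, cons_val, zero_mul, add_zero, mul_zero,
    zero_add]
  ring

theorem viscositySymbol_posSemidef {ν lam : ℝ} (hν : 0 ≤ ν) (hlam : 0 ≤ 2 * ν + lam)
    (ω₁ ω₂ : ℝ) : (viscositySymbol ν lam ω₁ ω₂).PosSemidef := by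
  refine posSemidef_iff_dotProduct_mulVec.mpr ⟨?_, fun x => ?_⟩
  · ext i j
    fin_cases i <;> fin_cases j <;> simp [viscositySymbol]
  · rw [star_trivial, dotProduct_viscositySymbol_mulVec]
    positivity

theorem viscositySymbol_mulVec_eq_zero_iff {ν lam ω₁ ω₂ : ℝ} (hν : 0 < ν)
    (hlam : 0 < 2 * ν + lam) (hω : ω₁ ^ 2 + ω₂ ^ 2 = 1) (ψ : Fin 3 → ℝ) :
    viscositySymbol ν lam ω₁ ω₂ *ᵥ ψ = 0 ↔ ∃ t : ℝ, ψ = t • ![1, 0, 0] := by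
  constructor
  · intro h
    have hq := dotProduct_viscositySymbol_mulVec ν lam ω₁ ω₂ ψ
    rw [h, dotProduct_zero] at hq
    obtain ⟨hpar, hperp⟩ : ω₁ * ψ 1 + ω₂ * ψ 2 = 0 ∧ ω₂ * ψ 1 - ω₁ * ψ 2 = 0 := by
      rw [eq_comm, add_eq_zero_iff_of_nonneg (by positivity) (by positivity)] at hq
      simpa [hlam.ne', hν.ne'] using hq
    have hψ₁ : ψ 1 = 0 := by linear_combination ω₁ * hpar + ω₂ * hperp - ψ 1 * hω
    have hψ₂ : ψ 2 = 0 := by linear_combination ω₂ * hpar - ω₁ * hperp - ψ 2 * hω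
    refine ⟨ψ 0, funext fun i => ?_⟩
    fin_cases i <;> simp [hψ₁, hψ₂]
  · rintro ⟨t, rfl⟩
    funext i
    fin_cases i <;> simp [viscositySymbol, mulVec, dotProduct, Fin.sum_univ_three]

/-- The transport symbol `A_S(ξ)`, with `a = ω·u` and `s = √β`. -/
def transportSymbol (a s ω₁ ω₂ : ℝ) : Matrix (Fin 3) (Fin 3) ℝ :=
  !![a, ω₁ * s, ω₂ * s;
     ω₁ * s, a, 0;
     ω₂ * s, 0, a]

theorem transportSymbol_mulVec_ne_zero {a s ω₁ ω₂ : ℝ} (hs : s ≠ 0) (hω : ω₁ ^ 2 + ω₂ ^ 2 = 1)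
    (μ : ℝ) :
    (μ • (1 : Matrix (Fin 3) (Fin 3) ℝ) + transportSymbol a s ω₁ ω₂) *ᵥ ![1, 0, 0] ≠ 0 := by
  intro h
  have h₁ := congrFun h 1
  have h₂ := congrFun h 2
  simp [transportSymbol, mulVec, dotProduct, Fin.sum_univ_three, one_apply, hs] at h₁ h₂
  simp [h₁, h₂] at hω

theorem div_sqrt_sq_add_div_sqrt_sq {x y : ℝ} (h : x ≠ 0 ∨ y ≠ 0) :
    (x / √(x ^ 2 + y ^ 2)) ^ 2 + (y / √(x ^ 2 + y ^ 2)) ^ 2 = 1 := by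
  have hpos : 0 < x ^ 2 + y ^ 2 := by
    rcases h with h | h <;> positivity
  rw [div_pow, div_pow, Real.sq_sqrt hpos.le, ← add_div, div_self hpos.ne']

/-- For the symmetrized symbols of the linearized two-dimensional
Navier–Stokes–Korteweg system, the generalized viscosity symbol `B̄_S(ξ)` is positive
semidefinite with kernel `span{(1,0,0)}`, and the pair `(A_S(ξ), B̄_S(ξ))` is genuinely
coupled, for every `ξ ≠ 0`. -/
theorem NSK_genuinely_coupled (ρ pρ k ν lam u₁ u₂ : ℝ)
    (hρ : 0 < ρ) (hp : 0 < pρ) (hk : 0 < k) (hν : 0 < ν) (hlam : 0 < 2 * ν + lam)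
    (ξ : Fin 2 → ℝ) (hξ : ξ ≠ 0) :
    let nξ := Real.sqrt (ξ 0 ^ 2 + ξ 1 ^ 2)
    let ω₁ := ξ 0 / nξ
    let ω₂ := ξ 1 / nξ
    let β := pρ + k * ρ * (ξ 0 ^ 2 + ξ 1 ^ 2)
    let AS : Matrix (Fin 3) (Fin 3) ℝ :=
      !![ω₁ * u₁ + ω₂ * u₂, ω₁ * Real.sqrt β, ω₂ * Real.sqrt β;
         ω₁ * Real.sqrt β, ω₁ * u₁ + ω₂ * u₂, 0;
         ω₂ * Real.sqrt β, 0, ω₁ * u₁ + ω₂ * u₂]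
    let BS : Matrix (Fin 3) (Fin 3) ℝ :=
      (1 / ρ) • !![0, 0, 0;
         0, (2 * ν + lam) * ω₁ ^ 2 + ν * ω₂ ^ 2, (lam + ν) * ω₁ * ω₂;
         0, (lam + ν) * ω₁ * ω₂, ν * ω₁ ^ 2 + (2 * ν + lam) * ω₂ ^ 2]
    BS.PosSemidef ∧
    (∀ ψ : Fin 3 → ℝ, BS *ᵥ ψ = 0 ↔ ∃ t : ℝ, ψ = t • ![1, 0, 0]) ∧
    GenuinelyCoupled AS BS := by
  intro nξ ω₁ ω₂ β AS BS
  have hω : ω₁ ^ 2 + ω₂ ^ 2 = 1 := by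
    refine div_sqrt_sq_add_div_sqrt_sq (not_and_or.mp fun h => hξ ?_)
    ext i; fin_cases i <;> simp [h.1, h.2]
  have hβ : Real.sqrt β ≠ 0 := (Real.sqrt_pos.mpr (by positivity)).ne'
  have hker : ∀ ψ : Fin 3 → ℝ, BS *ᵥ ψ = 0 ↔ ∃ t : ℝ, ψ = t • ![1, 0, 0] := fun ψ => by
    rw [← viscositySymbol_mulVec_eq_zero_iff hν hlam hω ψ, smul_mulVec,
      smul_eq_zero_iff_right (by positivity)]
    rfl
  refine ⟨(viscositySymbol_posSemidef hν.le hlam.le ω₁ ω₂).smul (by positivity), hker, ?_⟩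
  exact GenuinelyCoupled.of_mulVec_eq_zero_iff hker (transportSymbol_mulVec_ne_zero hβ hω)
end

section
/- Fix constants ρ̄ > 0, p̄_ρ > 0, k̄ > 0, ᾱ > 0, ē_θ > 0, γ > 0, and ū ∈ ℝ. For ξ ∈ ℝ, ξ ≠ 0, set β(ξ) = p̄_ρ + k̄ρ̄ξ² and define the real 3×3 matrices A_S(ξ) = [[ū, √β(ξ), 0], [√β(ξ), ū, γ], [0, γ, ū]] and B̄_S = diag(0, 0, ᾱ/(ρ̄ ē_θ)). Then for every ξ ≠ 0 the pair (A_S(ξ), B̄_S) is genuinely coupled, i.e., for every μ ∈ ℝ and every ψ ∈ ℝ³ with ψ ≠ 0 and B̄_S ψ = 0, one has (μI + A_S(ξ))ψ ≠ 0; equivalently, no eigenvector of A_S(ξ) lies in the kernel span{(1,0,0),(0,1,0)} of B̄_S. -/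
open Matrix

/-- For the symmetrized symbols of the linearized one-dimensional
Euler–Fourier–Korteweg system, the pair `(A_S(ξ), B̄_S)` is genuinely coupled for every
`ξ ≠ 0`. -/
theorem EFK_1d_genuinely_coupled (ρ pρ k α eθ γ u : ℝ)
    (hρ : 0 < ρ) (hp : 0 < pρ) (hk : 0 < k) (hα : 0 < α) (he : 0 < eθ) (hγ : 0 < γ)
    (ξ : ℝ) (hξ : ξ ≠ 0) :
    let β := pρ + k * ρ * ξ ^ 2
    let AS : Matrix (Fin 3) (Fin 3) ℝ :=
      !![u, Real.sqrt β, 0;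
         Real.sqrt β, u, γ;
         0, γ, u]
    let BS : Matrix (Fin 3) (Fin 3) ℝ :=
      !![0, 0, 0; 0, 0, 0; 0, 0, α / (ρ * eθ)]
    GenuinelyCoupled AS BS ∧
    (∀ ψ : Fin 3 → ℝ, BS *ᵥ ψ = 0 ↔ ∃ a b : ℝ, ψ = a • ![1, 0, 0] + b • ![0, 1, 0]) := by
  intro β AS BS
  have hβ : 0 < β := by positivity
  have hsβ : Real.sqrt β ≠ 0 := by positivity
  have hc : α / (ρ * eθ) ≠ 0 := by positivity
  have hker : ∀ ψ : Fin 3 → ℝ, BS *ᵥ ψ = 0 ↔ ψ 2 = 0 := by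
    intro ψ
    constructor
    · intro h
      have := congrFun h 2
      simpa [BS, mulVec, dotProduct, Fin.sum_univ_three, hα.ne', hρ.ne', he.ne'] using this
    · intro h
      funext i
      fin_cases i <;> simp [BS, mulVec, dotProduct, Fin.sum_univ_three, h]
  constructor
  · intro μ ψ hψ hB hcontra
    have h2 : ψ 2 = 0 := (hker ψ).mp hB
    have h0 := congrFun hcontra 0
    have h1c := congrFun hcontra 2
    simp [AS, mulVec, dotProduct, Fin.sum_univ_three, h2, Matrix.one_apply] at h0 h1c
    have h1 : ψ 1 = 0 := h1c.resolve_left hγ.ne'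
    have h0' : ψ 0 = 0 := by
      rw [h1] at h0
      have hmid := congrFun hcontra 1
      simp [AS, mulVec, dotProduct, Fin.sum_univ_three, h2, h1, Matrix.one_apply] at hmid
      exact hmid.resolve_left hsβ
    apply hψ
    funext i
    fin_cases i <;> simp [h0', h1, h2]
  · intro ψ
    rw [hker ψ]
    constructor
    · intro h
      refine ⟨ψ 0, ψ 1, ?_⟩
      funext i
      fin_cases i <;> simp [h]
    · rintro ⟨a, b, rfl⟩
      simp
end

section
/- Fix constants ρ̄ > 0, θ̄ > 0, μ̄ > 0, ᾱ > 0, τ̄₄ > 0, and ū ∈ ℝ³. For ξ ∈ ℝ³ with ξ ≠ 0, set ω = ξ/|ξ| and β(ξ) = √(3/(2θ̄)) ( (2/3)θ̄ + (8/(9ρ̄)) τ̄₄ |ξ|² ), and define the 5×5 real block matrices A_S(ξ) = [[ū·ω, √θ̄ ωᵀ, 0], [√θ̄ ω, (ū·ω) I₃, β(ξ) ω], [0, β(ξ) ωᵀ, ū·ω]] and B̄_S = [[0, 0, 0], [0, (μ̄/ρ̄) I₃ + (μ̄/(3ρ̄)) ω⊗ω, 0], [0, 0, (2/3)(ᾱ/ρ̄)]].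 Then for every ξ ≠ 0: B̄_S is positive semidefinite, its kernel equals span{(1,0,0,0,0)}, and the pair (A_S(ξ), B̄_S) is genuinely coupled, i.e., for every μ ∈ ℝ and every ψ ∈ ℝ⁵ with ψ ≠ 0 and B̄_S ψ = 0, one has (μI + A_S(ξ))ψ ≠ 0. -/
open Matrix

theorem GenuinelyCoupled.of_ker_eq_span {n : ℕ} {A B : Matrix (Fin n) (Fin n) ℝ} {v : Fin n → ℝ}
    (hker : ∀ ψ, B *ᵥ ψ = 0 ↔ ∃ t : ℝ, ψ = t • v)
    (hv : ∀ μ : ℝ, (μ • (1 : Matrix (Fin n) (Fin n) ℝ) + A) *ᵥ v ≠ 0) :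
    GenuinelyCoupled A B := by
  intro μ ψ hψ hBψ
  obtain ⟨t, rfl⟩ := (hker ψ).mp hBψ
  rw [mulVec_smul]
  exact smul_ne_zero (left_ne_zero_of_smul hψ) (hv μ)

namespace DNSF

/-- `A_S(ξ)` with `c = ū·ω`, `s = √θ̄` and `b = β(ξ)`. -/
def transportSymbol (c s b : ℝ) (ω : Fin 3 → ℝ) : Matrix (Fin 5) (Fin 5) ℝ :=
  !![c, s * ω 0, s * ω 1, s * ω 2, 0;
     s * ω 0, c, 0, 0, b * ω 0;
     s * ω 1, 0, c, 0, b * ω 1;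
     s * ω 2, 0, 0, c, b * ω 2;
     0, b * ω 0, b * ω 1, b * ω 2, c]

/-- `B̄_S` with `ν = μ̄/ρ̄`, `λ = μ̄/(3ρ̄)` and `κ = (2/3)(ᾱ/ρ̄)`. -/
def viscositySymbol (ν l κ : ℝ) (ω : Fin 3 → ℝ) : Matrix (Fin 5) (Fin 5) ℝ :=
  !![0, 0, 0, 0, 0;
     0, ν + l * ω 0 ^ 2, l * ω 0 * ω 1, l * ω 0 * ω 2, 0;
     0, l * ω 1 * ω 0, ν + l * ω 1 ^ 2, l * ω 1 * ω 2, 0;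
     0, l * ω 2 * ω 0, l * ω 2 * ω 1, ν + l * ω 2 ^ 2, 0;
     0, 0, 0, 0, κ]

variable (ν l κ : ℝ) (ω : Fin 3 → ℝ)

theorem viscositySymbol_isHermitian : (viscositySymbol ν l κ ω).IsHermitian := by
  refine IsHermitian.ext fun i j => ?_
  fin_cases i <;> fin_cases j <;> simp [viscositySymbol] <;> ring

theorem dotProduct_viscositySymbol_mulVec (ψ : Fin 5 → ℝ) :
    ψ ⬝ᵥ viscositySymbol ν l κ ω *ᵥ ψ =
      ν * (ψ 1 ^ 2 + ψ 2 ^ 2 + ψ 3 ^ 2) + l * (ω 0 * ψ 1 + ω 1 * ψ 2 + ω 2 * ψ 3) ^ 2 +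
        κ * ψ 4 ^ 2 := by
  simp [viscositySymbol, dotProduct, mulVec, Fin.sum_univ_five]
  ring

variable {ν l κ}

theorem viscositySymbol_posSemidef (hν : 0 ≤ ν) (hl : 0 ≤ l) (hκ : 0 ≤ κ) :
    (viscositySymbol ν l κ ω).PosSemidef := by
  refine posSemidef_iff_dotProduct_mulVec.mpr ⟨viscositySymbol_isHermitian ν l κ ω, fun ψ => ?_⟩
  rw [star_trivial, dotProduct_viscositySymbol_mulVec]
  positivity

theorem viscositySymbol_mulVec_eq_zero_iff (hν : 0 < ν) (hl : 0 ≤ l) (hκ : 0 < κ)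
    (ψ : Fin 5 → ℝ) :
    viscositySymbol ν l κ ω *ᵥ ψ = 0 ↔ ∃ t : ℝ, ψ = t • ![1, 0, 0, 0, 0] := by
  constructor
  · intro h
    have hq := dotProduct_viscositySymbol_mulVec ν l κ ω ψ
    rw [h, dotProduct_zero] at hq
    have hψ : ψ 1 = 0 ∧ ψ 2 = 0 ∧ ψ 3 = 0 ∧ ψ 4 = 0 := by
      refine ⟨?_, ?_, ?_, ?_⟩ <;> refine pow_eq_zero_iff two_ne_zero |>.mp ?_ <;>
        nlinarith [mul_nonneg hl (sq_nonneg (ω 0 * ψ 1 + ω 1 * ψ 2 + ω 2 * ψ 3)),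
          mul_nonneg hν.le (sq_nonneg (ψ 1)), mul_nonneg hν.le (sq_nonneg (ψ 2)),
          mul_nonneg hν.le (sq_nonneg (ψ 3)), mul_nonneg hκ.le (sq_nonneg (ψ 4))]
    refine ⟨ψ 0, ?_⟩
    ext i
    fin_cases i <;> simp [hψ]
  · rintro ⟨t, rfl⟩
    ext i
    fin_cases i <;> simp [viscositySymbol, mulVec, dotProduct, Fin.sum_univ_five]

theorem smul_one_add_transportSymbol_mulVec (μ c s b : ℝ) :
    (μ • (1 : Matrix (Fin 5) (Fin 5) ℝ) + transportSymbol c s b ω) *ᵥ ![1, 0, 0, 0, 0] =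
      ![μ + c, s * ω 0, s * ω 1, s * ω 2, 0] := by
  ext i
  fin_cases i <;> simp [transportSymbol, mulVec, dotProduct, Fin.sum_univ_five, one_apply]

theorem transportSymbol_not_eigenvector {s : ℝ} (hs : s ≠ 0) (hω : ω ≠ 0) (μ c b : ℝ) :
    (μ • (1 : Matrix (Fin 5) (Fin 5) ℝ) + transportSymbol c s b ω) *ᵥ ![1, 0, 0, 0, 0] ≠ 0 := by
  rw [smul_one_add_transportSymbol_mulVec]
  intro h
  apply hω
  ext i
  fin_cases i
  exacts [(mul_eq_zero.mp (congrFun h 1)).resolve_left hs,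
    (mul_eq_zero.mp (congrFun h 2)).resolve_left hs, (mul_eq_zero.mp (congrFun h 3)).resolve_left hs]

end DNSF

theorem DNSF_genuinely_coupled_general (ρ θ₀ μ₀ α τ₄ : ℝ) (u : Fin 3 → ℝ)
    (hρ : 0 < ρ) (hθ₀ : 0 < θ₀) (hμ₀ : 0 < μ₀) (hα : 0 < α)
    (ξ : Fin 3 → ℝ) (hξ : ξ ≠ 0) :
    let nξ2 := ξ 0 ^ 2 + ξ 1 ^ 2 + ξ 2 ^ 2
    let ω : Fin 3 → ℝ := fun i => ξ i / Real.sqrt nξ2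
    let β := Real.sqrt (3 / (2 * θ₀)) * ((2 / 3) * θ₀ + (8 / (9 * ρ)) * τ₄ * nξ2)
    let sθ := Real.sqrt θ₀
    let uω := u 0 * ω 0 + u 1 * ω 1 + u 2 * ω 2
    let AS : Matrix (Fin 5) (Fin 5) ℝ :=
      !![uω, sθ * ω 0, sθ * ω 1, sθ * ω 2, 0;
         sθ * ω 0, uω, 0, 0, β * ω 0;
         sθ * ω 1, 0, uω, 0, β * ω 1;
         sθ * ω 2, 0, 0, uω, β * ω 2;
         0, β * ω 0, β * ω 1, β * ω 2, uω]
    let BS : Matrix (Fin 5) (Fin 5) ℝ :=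
      !![0, 0, 0, 0, 0;
         0, μ₀ / ρ + (μ₀ / (3 * ρ)) * ω 0 ^ 2, (μ₀ / (3 * ρ)) * ω 0 * ω 1,
           (μ₀ / (3 * ρ)) * ω 0 * ω 2, 0;
         0, (μ₀ / (3 * ρ)) * ω 1 * ω 0, μ₀ / ρ + (μ₀ / (3 * ρ)) * ω 1 ^ 2,
           (μ₀ / (3 * ρ)) * ω 1 * ω 2, 0;
         0, (μ₀ / (3 * ρ)) * ω 2 * ω 0, (μ₀ / (3 * ρ)) * ω 2 * ω 1,
           μ₀ / ρ + (μ₀ / (3 * ρ)) * ω 2 ^ 2, 0;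
         0, 0, 0, 0, (2 / 3) * (α / ρ)]
    BS.PosSemidef ∧
    (∀ ψ : Fin 5 → ℝ, BS *ᵥ ψ = 0 ↔ ∃ t : ℝ, ψ = t • ![1, 0, 0, 0, 0]) ∧
    GenuinelyCoupled AS BS := by
  intro nξ2 ω β sθ uω AS BS
  have hnξ2 : 0 < nξ2 := by
    rw [show nξ2 = ξ ⬝ᵥ ξ by simp [nξ2, dotProduct, Fin.sum_univ_three, sq]]
    exact (dotProduct_self_star_nonneg ξ).lt_of_ne' (dotProduct_self_eq_zero.not.mpr hξ)
  have hω : ω ≠ 0 := by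
    rw [show ω = (Real.sqrt nξ2)⁻¹ • ξ by ext i; simp [ω, div_eq_inv_mul]]
    exact smul_ne_zero (by positivity) hξ
  have hker := DNSF.viscositySymbol_mulVec_eq_zero_iff ω (ν := μ₀ / ρ) (l := μ₀ / (3 * ρ))
    (κ := (2 / 3) * (α / ρ)) (by positivity) (by positivity) (by positivity)
  refine ⟨DNSF.viscositySymbol_posSemidef ω (by positivity) (by positivity) (by positivity),
    hker, GenuinelyCoupled.of_ker_eq_span hker fun μ => ?_⟩
  exact DNSF.transportSymbol_not_eigenvector ω (Real.sqrt_pos.mpr hθ₀).ne' hω μ uω β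

/-- For the symmetrized symbols of the linearized three-dimensional
dispersive Navier–Stokes–Fourier system of Levermore and Sun, the generalized viscosity
symbol `B̄_S` is positive semidefinite with kernel `span{(1,0,0,0,0)}`, and the pair
`(A_S(ξ), B̄_S)` is genuinely coupled, for every `ξ ≠ 0`. -/
theorem DNSF_genuinely_coupled (ρ θ₀ μ₀ α τ₄ : ℝ) (u : Fin 3 → ℝ)
    (hρ : 0 < ρ) (hθ₀ : 0 < θ₀) (hμ₀ : 0 < μ₀) (hα : 0 < α) (hτ : 0 < τ₄)
    (ξ : Fin 3 → ℝ) (hξ : ξ ≠ 0) :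
    let nξ2 := ξ 0 ^ 2 + ξ 1 ^ 2 + ξ 2 ^ 2
    let ω : Fin 3 → ℝ := fun i => ξ i / Real.sqrt nξ2
    let β := Real.sqrt (3 / (2 * θ₀)) * ((2 / 3) * θ₀ + (8 / (9 * ρ)) * τ₄ * nξ2)
    let sθ := Real.sqrt θ₀
    let uω := u 0 * ω 0 + u 1 * ω 1 + u 2 * ω 2
    let AS : Matrix (Fin 5) (Fin 5) ℝ :=
      !![uω, sθ * ω 0, sθ * ω 1, sθ * ω 2, 0;
         sθ * ω 0, uω, 0, 0, β * ω 0;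
         sθ * ω 1, 0, uω, 0, β * ω 1;
         sθ * ω 2, 0, 0, uω, β * ω 2;
         0, β * ω 0, β * ω 1, β * ω 2, uω]
    let BS : Matrix (Fin 5) (Fin 5) ℝ :=
      !![0, 0, 0, 0, 0;
         0, μ₀ / ρ + (μ₀ / (3 * ρ)) * ω 0 ^ 2, (μ₀ / (3 * ρ)) * ω 0 * ω 1,
           (μ₀ / (3 * ρ)) * ω 0 * ω 2, 0;
         0, (μ₀ / (3 * ρ)) * ω 1 * ω 0, μ₀ / ρ + (μ₀ / (3 * ρ)) * ω 1 ^ 2,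
           (μ₀ / (3 * ρ)) * ω 1 * ω 2, 0;
         0, (μ₀ / (3 * ρ)) * ω 2 * ω 0, (μ₀ / (3 * ρ)) * ω 2 * ω 1,
           μ₀ / ρ + (μ₀ / (3 * ρ)) * ω 2 ^ 2, 0;
         0, 0, 0, 0, (2 / 3) * (α / ρ)]
    BS.PosSemidef ∧
    (∀ ψ : Fin 5 → ℝ, BS *ᵥ ψ = 0 ↔ ∃ t : ℝ, ψ = t • ![1, 0, 0, 0, 0]) ∧
    GenuinelyCoupled AS BS :=
  DNSF_genuinely_coupled_general ρ θ₀ μ₀ α τ₄ u hρ hθ₀ hμ₀ hα ξ hξ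
end

section
/- Fix constants τ > 0 and Θ₀ > 0 and ε > 0, and for ξ ∈ ℝ³ with ξ ≠ 0 set ω = ξ/|ξ| and Θ(ξ) = Θ₀ + (ε²/12)|ξ|². Define the 4×4 real block matrices A_S(ξ) = √Θ(ξ) [[0, ωᵀ], [ω, 0₃]], B_S = [[0, 0], [0, (1/τ) I₃]], and K_S(ξ) = (1/(6 τ √Θ(ξ))) [[0, ωᵀ], [−ω, 0₃]]. Then for every ξ ≠ 0: (a) K_S(ξ) is skew-symmetric; (b) [K_S(ξ) A_S(ξ)]^s + B_S ≥ (1/(6τ)) I₄, i.e., the symmetric matrix [K_S(ξ)A_S(ξ)]^s + B_S − (1/(6τ))I₄ is positive semidefinite; and (c) the pair (A_S(ξ), B_S) is genuinely coupled, i.e., for every μ ∈ ℝ and every ψ ∈ ℝ⁴ with ψ ≠ 0 and B_S ψ = 0, one has (μI + A_S(ξ))ψ ≠ 0. -/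
open Matrix

/-!
With `ω` a unit vector, `K_S A_S = (6τ)⁻¹ [[1, 0], [0, -ω ωᵀ]]` is symmetric and independent of `Θ`,
so `[K_S A_S]ˢ + B_S - (6τ)⁻¹ I = (6τ)⁻¹ [[0, 0], [0, 5 I₃ - ω ωᵀ]]`, which is positive semidefinite
by Cauchy–Schwarz since `|ω|² = 1 ≤ 5`. For the coupling, `B_S ψ = 0` forces `ψ = (ψ₀, 0)` with
`ψ₀ ≠ 0`, and then the lower block of `(μ I + A_S) ψ` is `√Θ ψ₀ ω ≠ 0`.
-/

def symArrow (v : Fin 3 → ℝ) : Matrix (Fin 4) (Fin 4) ℝ :=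
  !![0, v 0, v 1, v 2;
     v 0, 0, 0, 0;
     v 1, 0, 0, 0;
     v 2, 0, 0, 0]

def skewArrow (v : Fin 3 → ℝ) : Matrix (Fin 4) (Fin 4) ℝ :=
  !![0, v 0, v 1, v 2;
     -v 0, 0, 0, 0;
     -v 1, 0, 0, 0;
     -v 2, 0, 0, 0]

def lowerScalar (c : ℝ) : Matrix (Fin 4) (Fin 4) ℝ :=
  !![0, 0, 0, 0;
     0, c, 0, 0;
     0, 0, c, 0;
     0, 0, 0, c]

lemma lowerScalar_eq_smul (c : ℝ) : lowerScalar c = c • (1 - single 0 0 1) := by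
  ext i j
  fin_cases i <;> fin_cases j <;> simp [lowerScalar, one_apply]

lemma symPart_eq_self {n : ℕ} {M : Matrix (Fin n) (Fin n) ℝ} (hM : Mᵀ = M) :
    symPart M = M := by
  rw [symPart, hM, ← two_smul ℝ M, smul_smul]
  norm_num

lemma skewArrow_transpose (v : Fin 3 → ℝ) : (skewArrow v)ᵀ = -skewArrow v := by
  ext i j
  fin_cases i <;> fin_cases j <;> simp [skewArrow]

lemma skewArrow_mul_symArrow (v : Fin 3 → ℝ) :
    skewArrow v * symArrow v =
      (v ⬝ᵥ v) • single 0 0 1 - vecMulVec (vecCons 0 v) (vecCons 0 v) := by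
  ext i j
  fin_cases i <;> fin_cases j <;>
    simp [skewArrow, symArrow, mul_apply, dotProduct, vecMulVec, Fin.sum_univ_four,
      Fin.sum_univ_three]

lemma posSemidef_lowerScalar_sub_vecMulVec {v : Fin 3 → ℝ} {c : ℝ} (hv : v ⬝ᵥ v ≤ c) :
    (lowerScalar c - vecMulVec (vecCons 0 v) (vecCons 0 v)).PosSemidef := by
  refine .of_dotProduct_mulVec_nonneg ?_ fun x => ?_
  · rw [IsHermitian, conjTranspose_eq_transpose_of_trivial, transpose_sub, transpose_vecMulVec,
      lowerScalar_eq_smul, transpose_smul, transpose_sub, transpose_one, transpose_single]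
  have hquad : star x ⬝ᵥ ((lowerScalar c - vecMulVec (vecCons 0 v) (vecCons 0 v)) *ᵥ x) =
      c * ∑ i : Fin 3, x i.succ ^ 2 - (∑ i : Fin 3, v i * x i.succ) ^ 2 := by
    simp only [dotProduct, Pi.star_apply, star_trivial, mulVec, lowerScalar, Matrix.sub_apply,
      of_apply, cons_val', cons_val_fin_one, vecMulVec_apply, Fin.sum_univ_four, cons_val_zero,
      cons_val_one, cons_val, mul_zero, zero_mul, sub_zero, sub_self, add_zero, zero_add,
      zero_sub, neg_mul, Fin.sum_univ_three, Fin.succ_zero_eq_one, Fin.succ_one_eq_two,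
      Fin.reduceSucc, Fin.isValue]
    ring
  rw [hquad, sub_nonneg]
  calc (∑ i : Fin 3, v i * x i.succ) ^ 2 ≤ (∑ i, v i ^ 2) * ∑ i : Fin 3, x i.succ ^ 2 :=
        Finset.sum_mul_sq_le_sq_mul_sq _ _ _
    _ ≤ c * ∑ i : Fin 3, x i.succ ^ 2 := by
        gcongr
        simpa only [dotProduct, ← sq] using hv

noncomputable def compensatedDissipation (τ s : ℝ) (v : Fin 3 → ℝ) : Matrix (Fin 4) (Fin 4) ℝ :=
  symPart (((1 / (6 * τ * s)) • skewArrow v) * (s • symArrow v)) + lowerScalar (1 / τ)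

lemma compensatedDissipation_sub_eq {τ s : ℝ} {v : Fin 3 → ℝ} (hs : s ≠ 0) (hv : v ⬝ᵥ v = 1) :
    compensatedDissipation τ s v - (1 / (6 * τ)) • (1 : Matrix (Fin 4) (Fin 4) ℝ) =
      (1 / (6 * τ)) • (lowerScalar 5 - vecMulVec (vecCons 0 v) (vecCons 0 v)) := by
  have hKA : ((1 / (6 * τ * s)) • skewArrow v) * (s • symArrow v) =
      (1 / (6 * τ)) • (single 0 0 1 - vecMulVec (vecCons 0 v) (vecCons 0 v)) := by
    rw [smul_mul_smul_comm, skewArrow_mul_symArrow, hv, one_smul]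
    congr 1
    field_simp
  have hsymm : (single 0 0 1 - vecMulVec (vecCons 0 v) (vecCons 0 v))ᵀ =
      single (0 : Fin 4) 0 1 - vecMulVec (vecCons 0 v) (vecCons 0 v) := by
    rw [transpose_sub, transpose_single, transpose_vecMulVec]
  rw [compensatedDissipation, hKA, symPart_eq_self (by rw [transpose_smul, hsymm]),
    lowerScalar_eq_smul, lowerScalar_eq_smul]
  module

lemma posSemidef_compensatedDissipation_sub {τ s : ℝ} {v : Fin 3 → ℝ} (hτ : 0 < τ)
    (hs : s ≠ 0) (hv : v ⬝ᵥ v = 1) :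
    (compensatedDissipation τ s v - (1 / (6 * τ)) • (1 : Matrix (Fin 4) (Fin 4) ℝ)).PosSemidef := by
  rw [compensatedDissipation_sub_eq hs hv]
  exact (posSemidef_lowerScalar_sub_vecMulVec (by linarith)).smul (by positivity)

lemma lowerScalar_mulVec_succ (c : ℝ) (ψ : Fin 4 → ℝ) (i : Fin 3) :
    (lowerScalar c *ᵥ ψ) i.succ = c * ψ i.succ := by
  fin_cases i <;> simp [lowerScalar, mulVec, dotProduct, Fin.sum_univ_four]

lemma smul_one_add_smul_symArrow_mulVec_succ (μ s : ℝ) (v : Fin 3 → ℝ) (ψ : Fin 4 → ℝ)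
    (i : Fin 3) :
    ((μ • 1 + s • symArrow v) *ᵥ ψ) i.succ = μ * ψ i.succ + s * v i * ψ 0 := by
  fin_cases i <;> simp [symArrow, mulVec, dotProduct, Fin.sum_univ_four, one_apply] <;> ring

lemma genuinelyCoupled_smul_symArrow_lowerScalar {s c : ℝ} {v : Fin 3 → ℝ} (hs : s ≠ 0)
    (hc : c ≠ 0) (hv : v ≠ 0) : GenuinelyCoupled (s • symArrow v) (lowerScalar c) := by
  intro μ ψ hψ hB hA
  have htail : ∀ i : Fin 3, ψ i.succ = 0 := fun i => by
    simpa [lowerScalar_mulVec_succ, hc] using congrFun hB i.succ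
  have hψ0 : ψ 0 ≠ 0 := fun h0 => hψ (funext (Fin.cases h0 htail))
  obtain ⟨i, hi⟩ := Function.ne_iff.1 hv
  have hAi := congrFun hA i.succ
  rw [smul_one_add_smul_symArrow_mulVec_succ, htail i, mul_zero, zero_add] at hAi
  exact mul_ne_zero (mul_ne_zero hs hi) hψ0 hAi

lemma dotProduct_self_normalize {n : ℕ} {ξ : Fin n → ℝ} (hξ : ξ ≠ 0) :
    (fun i => ξ i / √(ξ ⬝ᵥ ξ)) ⬝ᵥ (fun i => ξ i / √(ξ ⬝ᵥ ξ)) = 1 := by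
  have hpos : 0 < ξ ⬝ᵥ ξ := by simpa using dotProduct_star_self_pos_iff.2 hξ
  have hsmul : (fun i => ξ i / √(ξ ⬝ᵥ ξ)) = (√(ξ ⬝ᵥ ξ))⁻¹ • ξ := by
    ext i
    simp [div_eq_inv_mul]
  rw [hsmul, dotProduct_smul, smul_dotProduct, smul_eq_mul, smul_eq_mul, ← mul_assoc, ← mul_inv,
    Real.mul_self_sqrt hpos.le, inv_mul_cancel₀ hpos.ne']

theorem QHD_compensating_symbol_general (τ Θ₀ ε : ℝ)
    (hτ : 0 < τ) (hΘ₀ : 0 < Θ₀)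
    (ξ : Fin 3 → ℝ) (hξ : ξ ≠ 0) :
    let nξ2 := ξ 0 ^ 2 + ξ 1 ^ 2 + ξ 2 ^ 2
    let ω : Fin 3 → ℝ := fun i => ξ i / Real.sqrt nξ2
    let Θ := Θ₀ + (ε ^ 2 / 12) * nξ2
    let AS : Matrix (Fin 4) (Fin 4) ℝ :=
      Real.sqrt Θ • !![0, ω 0, ω 1, ω 2;
                       ω 0, 0, 0, 0;
                       ω 1, 0, 0, 0;
                       ω 2, 0, 0, 0]
    let BS : Matrix (Fin 4) (Fin 4) ℝ :=
      !![0, 0, 0, 0;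
         0, 1 / τ, 0, 0;
         0, 0, 1 / τ, 0;
         0, 0, 0, 1 / τ]
    let KS : Matrix (Fin 4) (Fin 4) ℝ :=
      (1 / (6 * τ * Real.sqrt Θ)) • !![0, ω 0, ω 1, ω 2;
                                       -ω 0, 0, 0, 0;
                                       -ω 1, 0, 0, 0;
                                       -ω 2, 0, 0, 0]
    (KSᵀ = -KS) ∧
    (symPart (KS * AS) + BS - (1 / (6 * τ)) • (1 : Matrix (Fin 4) (Fin 4) ℝ)).PosSemidef ∧
    GenuinelyCoupled AS BS := by
  intro nξ2 ω Θ AS BS KS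
  have hω : ω ⬝ᵥ ω = 1 := by
    have hnξ2 : nξ2 = ξ ⬝ᵥ ξ := by simp [nξ2, dotProduct, Fin.sum_univ_three, sq]
    simpa only [ω, hnξ2] using dotProduct_self_normalize hξ
  have hΘ : 0 < √Θ := Real.sqrt_pos.2 (by positivity)
  refine ⟨?_, posSemidef_compensatedDissipation_sub hτ hΘ.ne' hω,
    genuinelyCoupled_smul_symArrow_lowerScalar hΘ.ne' (one_div_ne_zero hτ.ne') ?_⟩
  · change (_ • skewArrow ω)ᵀ = -(_ • skewArrow ω)
    rw [transpose_smul, skewArrow_transpose, smul_neg]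
  · intro h
    simp [h] at hω

/-- For the symmetrized symbols of the linearized isentropic quantum
hydrodynamics system, `K_S(ξ)` is skew-symmetric, `[K_S(ξ)A_S(ξ)]ˢ + B_S ≥ (1/(6τ)) I₄`,
and the pair `(A_S(ξ), B_S)` is genuinely coupled, for every `ξ ≠ 0`. -/
theorem QHD_compensating_symbol (τ Θ₀ ε : ℝ)
    (hτ : 0 < τ) (hΘ₀ : 0 < Θ₀) (hε : 0 < ε)
    (ξ : Fin 3 → ℝ) (hξ : ξ ≠ 0) :
    let nξ2 := ξ 0 ^ 2 + ξ 1 ^ 2 + ξ 2 ^ 2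
    let ω : Fin 3 → ℝ := fun i => ξ i / Real.sqrt nξ2
    let Θ := Θ₀ + (ε ^ 2 / 12) * nξ2
    let AS : Matrix (Fin 4) (Fin 4) ℝ :=
      Real.sqrt Θ • !![0, ω 0, ω 1, ω 2;
                       ω 0, 0, 0, 0;
                       ω 1, 0, 0, 0;
                       ω 2, 0, 0, 0]
    let BS : Matrix (Fin 4) (Fin 4) ℝ :=
      !![0, 0, 0, 0;
         0, 1 / τ, 0, 0;
         0, 0, 1 / τ, 0;
         0, 0, 0, 1 / τ]
    let KS : Matrix (Fin 4) (Fin 4) ℝ :=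
      (1 / (6 * τ * Real.sqrt Θ)) • !![0, ω 0, ω 1, ω 2;
                                       -ω 0, 0, 0, 0;
                                       -ω 1, 0, 0, 0;
                                       -ω 2, 0, 0, 0]
    (KSᵀ = -KS) ∧
    (symPart (KS * AS) + BS - (1 / (6 * τ)) • (1 : Matrix (Fin 4) (Fin 4) ℝ)).PosSemidef ∧
    GenuinelyCoupled AS BS :=
  QHD_compensating_symbol_general τ Θ₀ ε hτ hΘ₀ ξ hξ
end

section
/- Fix constants n̄ > 0, ḡ > 0, ħ > 0, κ̄ > 0, τ_p > 0, τ_w > 0. For ξ ∈ ℝ³ with ξ ≠ 0, set ω = ξ/|ξ| and define the 5×5 real matrices A(ξ) and B(ξ) by: A(ξ) = [[0, n̄ωᵀ, 0], [((2/3)ḡ + (ħ²/18)|ξ|²) ω, 0₃, (2n̄/3) ω], [0, (2n̄ḡ/3) ωᵀ, 0]] (block structure with scalar first and last components and a 3-vector middle component), and B(ξ) the matrix whose only nonzero entries are B(ξ)_{22} = B(ξ)_{33} = B(ξ)_{44} = n̄/τ_p, B(ξ)_{55} = n̄/τ_w + (2/3)κ̄|ξ|², and B(ξ)_{51} = −(ħ²κ̄/(36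 n̄))|ξ|⁴. Then there is no family {S(ξ)}_{ξ ∈ ℝ³∖{0}} of real symmetric positive definite 5×5 matrices such that S(ξ)A(ξ) and S(ξ)B(ξ) are symmetric for every ξ ≠ 0. In particular, the linearized full quantum hydrodynamics system with energy exchanges is not symbol symmetrizable. -/
/-!
Take `ξ = (√T, 0, 0)`, so `ω = e₁`. Symmetry of `S B` in the entries `(0,4)`, `(4,0)` gives
`S₀₄ d = -S₄₄ c` with `c = ħ²κ̄T²/(36n̄)` and `d = n̄/τ_w + 2κ̄T/3`, and symmetry of `S A` in the
entries `(1,4)`, `(4,1)` gives `S₀₄ + (2ḡ/3) S₄₄ = (2/3) S₁₁`. As the diagonal of `S` is positive,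
this forces `c < (2ḡ/3) d`, which fails for large `T` because `c` is quadratic in `T` and `d`
only linear.
-/

open Matrix

theorem exists_pos_add_mul_lt_mul_sq {α : ℝ} (hα : 0 < α) (β γ : ℝ) :
    ∃ T, 0 < T ∧ β + γ * T < α * T ^ 2 := by
  set T := 1 + (|β| + |γ|) / α
  have hT : 1 ≤ T := le_add_of_nonneg_right (by positivity)
  have hαT : α * T = α + |β| + |γ| := by simp only [T]; field_simp; ring
  refine ⟨T, by linarith, ?_⟩
  calc β + γ * T ≤ |β| * T + |γ| * T := by
        nlinarith [le_abs_self β, le_abs_self γ, abs_nonneg β]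
    _ < α * T * T := by rw [hαT]; nlinarith
    _ = α * T ^ 2 := by ring

theorem lt_mul_of_mul_eq_neg_of_add_mul_pos {x y c d a w : ℝ} (hy : 0 < y) (hd : 0 < d)
    (hw : 0 < w) (hxd : x * d = -(y * c)) (hxa : x + a * y = w) : c < a * d := by
  have : y * (a * d - c) = w * d := by linear_combination d * hxa - hxd
  nlinarith [mul_pos hw hd]

theorem fullQHD_not_symbol_symmetrizable_general (n g h κ τp τw : ℝ)
    (hn : 0 < n) (hh : 0 < h) (hκ : 0 < κ) (hτw : 0 < τw) :
    let nξ2 : (Fin 3 → ℝ) → ℝ := fun ξ => ξ 0 ^ 2 + ξ 1 ^ 2 + ξ 2 ^ 2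
    let ω : (Fin 3 → ℝ) → Fin 3 → ℝ := fun ξ i => ξ i / Real.sqrt (nξ2 ξ)
    let H : (Fin 3 → ℝ) → ℝ := fun ξ => (2 / 3) * g + (h ^ 2 / 18) * nξ2 ξ
    let A : (Fin 3 → ℝ) → Matrix (Fin 5) (Fin 5) ℝ := fun ξ =>
      !![0, n * ω ξ 0, n * ω ξ 1, n * ω ξ 2, 0;
         H ξ * ω ξ 0, 0, 0, 0, (2 * n / 3) * ω ξ 0;
         H ξ * ω ξ 1, 0, 0, 0, (2 * n / 3) * ω ξ 1;
         H ξ * ω ξ 2, 0, 0, 0, (2 * n / 3) * ω ξ 2;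
         0, (2 * n * g / 3) * ω ξ 0, (2 * n * g / 3) * ω ξ 1, (2 * n * g / 3) * ω ξ 2, 0]
    let B : (Fin 3 → ℝ) → Matrix (Fin 5) (Fin 5) ℝ := fun ξ =>
      !![0, 0, 0, 0, 0;
         0, n / τp, 0, 0, 0;
         0, 0, n / τp, 0, 0;
         0, 0, 0, n / τp, 0;
         -((h ^ 2 * κ / (36 * n)) * nξ2 ξ ^ 2), 0, 0, 0, n / τw + (2 / 3) * κ * nξ2 ξ]
    ¬ ∃ S : (Fin 3 → ℝ) → Matrix (Fin 5) (Fin 5) ℝ,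
        ∀ ξ : Fin 3 → ℝ, ξ ≠ 0 →
          (S ξ).PosDef ∧ (S ξ * A ξ).IsSymm ∧ (S ξ * B ξ).IsSymm := by
  intro nξ2 ω H A B ⟨S, hS⟩
  obtain ⟨T, hT, hgrowth⟩ := exists_pos_add_mul_lt_mul_sq (α := h ^ 2 * κ / (36 * n))
    (by positivity) (2 * g / 3 * (n / τw)) (2 * g / 3 * (2 / 3 * κ))
  set ξ : Fin 3 → ℝ := ![√T, 0, 0]
  have hnξ : nξ2 ξ = T := by simp [nξ2, ξ, Real.sq_sqrt hT.le]
  have hω : ω ξ = ![1, 0, 0] := by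
    ext i; fin_cases i <;> simp [ω, hnξ, ξ, (Real.sqrt_pos.2 hT).ne']
  have hξ : ξ ≠ 0 := fun h0 => by simpa [ξ, (Real.sqrt_pos.2 hT).ne'] using congrFun h0 0
  obtain ⟨hSpos, hSA, hSB⟩ := hS ξ hξ
  have hB : S ξ 0 4 * (n / τw + 2 / 3 * κ * T) =
      -(S ξ 4 4 * (h ^ 2 * κ / (36 * n) * T ^ 2)) := by
    simpa [B, hnξ, mul_apply, Fin.sum_univ_five] using hSB.apply 4 0
  have hA : S ξ 0 4 + 2 * g / 3 * S ξ 4 4 = 2 / 3 * S ξ 1 1 := by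
    have hS40 : S ξ 4 0 = S ξ 0 4 := by simpa using hSpos.isHermitian.apply 0 4
    have hSA14 := hSA.apply 1 4
    simp only [A, hω, mul_apply, of_apply, Fin.sum_univ_five, cons_val', cons_val_zero,
      cons_val_one, cons_val, cons_val_fin_one, Fin.isValue, mul_one, mul_zero, add_zero,
      zero_add] at hSA14
    exact mul_left_cancel₀ hn.ne' (by linear_combination hSA14 - n * hS40)
  linarith [lt_mul_of_mul_eq_neg_of_add_mul_pos hSpos.diag_pos (by positivity)
    (mul_pos (by norm_num) hSpos.diag_pos) hB hA]

/-- The linearized full quantum hydrodynamics system with energy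
exchanges is not symbol symmetrizable: there is no family `S(ξ)` of real symmetric
positive definite `5 × 5` matrices such that `S(ξ)A(ξ)` and `S(ξ)B(ξ)` are symmetric
for all `ξ ≠ 0`, where `A(ξ)` and `B(ξ)` are the generalized transport and dissipation
symbols of the system. -/
theorem fullQHD_not_symbol_symmetrizable (n g h κ τp τw : ℝ)
    (hn : 0 < n) (hg : 0 < g) (hh : 0 < h) (hκ : 0 < κ) (hτp : 0 < τp) (hτw : 0 < τw) :
    let nξ2 : (Fin 3 → ℝ) → ℝ := fun ξ => ξ 0 ^ 2 + ξ 1 ^ 2 + ξ 2 ^ 2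
    let ω : (Fin 3 → ℝ) → Fin 3 → ℝ := fun ξ i => ξ i / Real.sqrt (nξ2 ξ)
    let H : (Fin 3 → ℝ) → ℝ := fun ξ => (2 / 3) * g + (h ^ 2 / 18) * nξ2 ξ
    let A : (Fin 3 → ℝ) → Matrix (Fin 5) (Fin 5) ℝ := fun ξ =>
      !![0, n * ω ξ 0, n * ω ξ 1, n * ω ξ 2, 0;
         H ξ * ω ξ 0, 0, 0, 0, (2 * n / 3) * ω ξ 0;
         H ξ * ω ξ 1, 0, 0, 0, (2 * n / 3) * ω ξ 1;
         H ξ * ω ξ 2, 0, 0, 0, (2 * n / 3) * ω ξ 2;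
         0, (2 * n * g / 3) * ω ξ 0, (2 * n * g / 3) * ω ξ 1, (2 * n * g / 3) * ω ξ 2, 0]
    let B : (Fin 3 → ℝ) → Matrix (Fin 5) (Fin 5) ℝ := fun ξ =>
      !![0, 0, 0, 0, 0;
         0, n / τp, 0, 0, 0;
         0, 0, n / τp, 0, 0;
         0, 0, 0, n / τp, 0;
         -((h ^ 2 * κ / (36 * n)) * nξ2 ξ ^ 2), 0, 0, 0, n / τw + (2 / 3) * κ * nξ2 ξ]
    ¬ ∃ S : (Fin 3 → ℝ) → Matrix (Fin 5) (Fin 5) ℝ,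
        ∀ ξ : Fin 3 → ℝ, ξ ≠ 0 →
          (S ξ).PosDef ∧ (S ξ * A ξ).IsSymm ∧ (S ξ * B ξ).IsSymm :=
  fullQHD_not_symbol_symmetrizable_general n g h κ τp τw hn hh hκ hτw
end
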